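/- (Multiplicity lemma, C^m version.) Let n ≥ 2, let m ≥ n, and let a₂,…,aₙ : ℝ → ℝ be functions of class C^m such that for every t ∈ ℝ the monic polynomial P(t)(x) = xⁿ + a₂(t)xⁿ⁻² - a₃(t)xⁿ⁻³ + ⋯ + (-1)ⁿaₙ(t) (i.e. with a₁ ≡ 0) has all roots real. Then the following are equivalent: (1) for every k with 2 ≤ k ≤ n there is a function a_{k,k} of class C^{m-k} with a_k(t) = t^k·a_{k,k}(t) for all t; (2) there is a function a_{2,2} of class C^{m-2} with a₂(t) = t²·a_{2,2}(t) for all t. -/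

import Mathlib

open Polynomial

/-- The monic polynomial curve `P(t)(x) = xⁿ - a₁(t)xⁿ⁻¹ + a₂(t)xⁿ⁻² - ⋯ + (-1)ⁿ aₙ(t)`. -/
noncomputable def curvePoly (n : ℕ) (a : ℕ → ℝ → ℝ) (t : ℝ) : Polynomial ℝ :=
  X ^ n + ∑ k ∈ Finset.Icc 1 n, C ((-1 : ℝ) ^ k * a k t) * X ^ (n - k)

/-- `x : T → ℝⁿ` parametrizes the roots of `P` on `T`: for each `t ∈ T` the multiset
`{x₁(t),…,xₙ(t)}` equals the multiset of roots of `P(t)` with multiplicity. -/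
def IsRootParamOn (n : ℕ) (a : ℕ → ℝ → ℝ) (T : Set ℝ) (x : Fin n → ℝ → ℝ) : Prop :=
  ∀ t ∈ T, (curvePoly n a t).roots = Multiset.map (fun i => x i t) (Finset.univ : Finset (Fin n)).val

/-!
Since `a₁ = 0`, the roots `xᵢ(t)` of `P(t)` satisfy `∑ xᵢ² = (∑ xᵢ)² - 2a₂ = -2t²a₂₂(t)`, so every
root is bounded by `|t|·√(-2a₂₂(t))` and `aₖ(t) = eₖ(x(t))` by `C(n,k)·√(-2a₂₂(t))ᵏ·|t|ᵏ`.
A `Cᵐ` function bounded by `c(t)|t|ᵏ` with `c` continuous and `k ≤ m` is `tᵏ` times a `Cᵐ⁻ᵏ`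
function: divide by `t` one factor at a time with Hadamard's lemma `f(t) = t ∫₀¹ f'(st) ds`, each
division costing one derivative and, by continuity, keeping the bound.
-/

section Hadamard

open intervalIntegral Set Metric
open scoped Interval

theorem hasDerivAt_integral_pow_mul_comp_mul {u : ℝ → ℝ} (hu : ContDiff ℝ 1 u) (p : ℕ)
    (t₀ : ℝ) :
    HasDerivAt (fun t => ∫ s in (0:ℝ)..1, s ^ p * u (s * t))
      (∫ s in (0:ℝ)..1, s ^ (p + 1) * deriv u (s * t₀)) t₀ := by
  have hu' : Continuous (deriv u) := hu.continuous_deriv le_rfl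
  obtain ⟨C, hC⟩ := (isCompact_closedBall (0:ℝ) (|t₀| + 1)).exists_bound_of_continuousOn
    hu'.continuousOn
  have h_bound : ∀ s ∈ Ι (0:ℝ) 1, ∀ x ∈ ball t₀ 1, ‖s ^ (p + 1) * deriv u (s * x)‖ ≤ C := by
    intro s hs x hx
    rw [uIoc_of_le zero_le_one] at hs
    have hs1 : |s| ≤ 1 := abs_le.mpr ⟨by linarith [hs.1], hs.2⟩
    have hx1 : |x - t₀| < 1 := by rwa [mem_ball, Real.dist_eq] at hx
    have hsx : s * x ∈ closedBall (0:ℝ) (|t₀| + 1) := by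
      rw [mem_closedBall_zero_iff, Real.norm_eq_abs, abs_mul]
      calc |s| * |x| ≤ 1 * |x| := by gcongr
        _ ≤ |t₀| + 1 := by linarith [abs_sub_abs_le_abs_sub x t₀]
    calc ‖s ^ (p + 1) * deriv u (s * x)‖ = |s| ^ (p + 1) * ‖deriv u (s * x)‖ := by
          rw [norm_mul, norm_pow, Real.norm_eq_abs]
      _ ≤ 1 * C := by
          gcongr
          · exact pow_le_one₀ (abs_nonneg s) hs1
          · exact hC _ hsx
      _ = C := one_mul C
  have h_diff (s x : ℝ) :
      HasDerivAt (fun x => s ^ p * u (s * x)) (s ^ (p + 1) * deriv u (s * x)) x :=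
    (((hu.differentiable one_ne_zero (s * x)).hasDerivAt.comp x
      ((hasDerivAt_id x).const_mul s)).const_mul (s ^ p)).congr_deriv (by ring)
  refine (hasDerivAt_integral_of_dominated_loc_of_deriv_le (bound := fun _ => C)
    (ball_mem_nhds t₀ one_pos) ?_ ?_ ?_ (Filter.Eventually.of_forall h_bound)
    intervalIntegrable_const (Filter.Eventually.of_forall fun s _ x _ => h_diff s x)).2
  · exact Filter.Eventually.of_forall fun x => (by fun_prop : Continuous _).aestronglyMeasurable
  · exact (by fun_prop : Continuous _).intervalIntegrable _ _
  · exact (by fun_prop : Continuous _).aestronglyMeasurable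

theorem contDiff_integral_pow_mul_comp_mul (j p : ℕ) {u : ℝ → ℝ} (hu : ContDiff ℝ j u) :
    ContDiff ℝ j (fun t => ∫ s in (0:ℝ)..1, s ^ p * u (s * t)) := by
  induction j generalizing p u with
  | zero =>
    rw [Nat.cast_zero, contDiff_zero] at hu ⊢
    exact continuous_parametric_intervalIntegral_of_continuous' (by fun_prop) 0 1
  | succ j ih =>
    rw [Nat.cast_succ, contDiff_succ_iff_deriv] at hu ⊢
    have hu1 : ContDiff ℝ 1 u := contDiff_succ_iff_deriv.mpr ⟨hu.1, by simp, hu.2.2.of_le bot_le⟩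
    have hderiv := hasDerivAt_integral_pow_mul_comp_mul hu1 p
    refine ⟨fun t => (hderiv t).differentiableAt, by simp, ?_⟩
    rw [funext fun t => (hderiv t).deriv]
    exact ih (p + 1) hu.2.2

theorem exists_contDiff_eq_mul_of_apply_zero {r : ℕ} {f : ℝ → ℝ} (hf : ContDiff ℝ (r + 1 : ℕ) f)
    (h0 : f 0 = 0) : ∃ g : ℝ → ℝ, ContDiff ℝ r g ∧ ∀ t, f t = t * g t := by
  rw [Nat.cast_succ, contDiff_succ_iff_deriv] at hf
  obtain ⟨hfd, -, hf'⟩ := hf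
  have hf'c := hf'.continuous
  refine ⟨fun t => ∫ s in (0:ℝ)..1, deriv f (s * t),
    by simpa using contDiff_integral_pow_mul_comp_mul r 0 hf', fun t => ?_⟩
  have hderiv (s : ℝ) : HasDerivAt (fun s => f (s * t)) (deriv f (s * t) * t) s :=
    ((hfd (s * t)).hasDerivAt.comp s ((hasDerivAt_id s).mul_const t)).congr_deriv (by ring)
  have hFTC := integral_eq_sub_of_hasDerivAt (fun s _ => hderiv s)
    ((by fun_prop : Continuous fun s => deriv f (s * t) * t).intervalIntegrable 0 1)
  simp only [one_mul, zero_mul, h0, sub_zero, integral_mul_const] at hFTC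
  rw [← hFTC, mul_comm]

theorem exists_contDiff_eq_pow_mul_of_abs_le {k r : ℕ} (hkr : k ≤ r) {f c : ℝ → ℝ}
    (hf : ContDiff ℝ r f) (hc : Continuous c) (hbound : ∀ t, |f t| ≤ c t * |t| ^ k) :
    ∃ g : ℝ → ℝ, ContDiff ℝ (r - k : ℕ) g ∧ (∀ t, f t = t ^ k * g t) ∧ ∀ t, |g t| ≤ c t := by
  induction k generalizing r f with
  | zero => exact ⟨f, by simpa using hf, fun t => by simp, fun t => by simpa using hbound t⟩
  | succ k ih =>
    obtain ⟨r, rfl⟩ : ∃ r', r = r' + 1 := ⟨r - 1, by omega⟩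
    obtain ⟨h, hh, hfh⟩ := exists_contDiff_eq_mul_of_apply_zero hf (by simpa using hbound 0)
    have hbound_ne : ∀ t ∈ ({0}ᶜ : Set ℝ), |h t| ≤ c t * |t| ^ k := by
      intro t ht
      refine le_of_mul_le_mul_left ?_ (abs_pos.mpr ht)
      calc |t| * |h t| = |f t| := by rw [hfh, abs_mul]
        _ ≤ c t * |t| ^ (k + 1) := hbound t
        _ = |t| * (c t * |t| ^ k) := by ring
    have hhbound (t : ℝ) : |h t| ≤ c t * |t| ^ k :=
      le_on_closure hbound_ne hh.continuous.abs.continuousOn (by fun_prop)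
        (dense_compl_singleton 0 t)
    obtain ⟨g, hg, hhg, hgc⟩ := ih (by omega) hh hhbound
    exact ⟨g, by simpa using hg, fun t => by rw [hfh, hhg]; ring, hgc⟩

end Hadamard

namespace Multiset

variable {R : Type*}

theorem esymm_one [CommSemiring R] (s : Multiset R) : s.esymm 1 = s.sum := by
  simp [esymm, powersetCard_one, map_map]

theorem esymm_two_cons [CommSemiring R] (x : R) (s : Multiset R) :
    (x ::ₘ s).esymm 2 = x * s.sum + s.esymm 2 := by
  rw [esymm, powersetCard_cons, map_add, sum_add, add_comm, esymm]
  simp [powersetCard_one, map_map, sum_map_mul_left (f := fun y : R => y)]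

theorem sq_sum_eq_sum_map_sq_add_two_mul_esymm_two [CommSemiring R] (s : Multiset R) :
    s.sum ^ 2 = (s.map (· ^ 2)).sum + 2 * s.esymm 2 := by
  induction s using Multiset.induction_on with
  | empty => simp [esymm, powersetCard_zero_right 1]
  | cons x s ih => rw [sum_cons, esymm_two_cons, map_cons, sum_cons, add_sq, ih]; ring

theorem abs_esymm_le [CommRing R] [LinearOrder R] [IsStrictOrderedRing R] {s : Multiset R}
    {M : R} (h : ∀ x ∈ s, |x| ≤ M) (k : ℕ) :
    |s.esymm k| ≤ (card s).choose k * M ^ k := by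
  have hprod : ∀ y ∈ (s.powersetCard k).map fun u => |u.prod|, y ≤ M ^ k := by
    simp only [mem_map, mem_powersetCard]
    rintro _ ⟨u, ⟨hus, rfl⟩, rfl⟩
    exact (map_multiset_prod absHom u).trans_le
      (prod_map_le_pow_card (fun x _ => abs_nonneg x) fun x hx => h x (mem_of_le hus hx))
  calc |s.esymm k| ≤ ((s.powersetCard k).map fun u => |u.prod|).sum := by
        simpa [esymm, map_map, Function.comp_def] using
          abs_sum_le_sum_abs (s := (s.powersetCard k).map prod)
    _ ≤ (card s).choose k * M ^ k := by
        simpa [card_powersetCard] using sum_le_card_nsmul _ _ hprod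

theorem abs_le_sqrt_neg_two_mul_esymm_two {s : Multiset ℝ} (hs : s.sum = 0) {x : ℝ}
    (hx : x ∈ s) : |x| ≤ √(-2 * s.esymm 2) := by
  refine Real.abs_le_sqrt ?_
  have := sq_sum_eq_sum_map_sq_add_two_mul_esymm_two s
  calc x ^ 2 ≤ (s.map (· ^ 2)).sum :=
        single_le_sum (fun y hy => by obtain ⟨z, -, rfl⟩ := mem_map.mp hy; positivity) _
          (mem_map_of_mem _ hx)
    _ = -2 * s.esymm 2 := by rw [hs] at this; linarith

end Multiset

section curvePoly

variable (n : ℕ) (a : ℕ → ℝ → ℝ) (t : ℝ)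

theorem degree_curvePoly_sub_X_pow_lt :
    (∑ k ∈ Finset.Icc 1 n, C ((-1 : ℝ) ^ k * a k t) * X ^ (n - k)).degree < (n : WithBot ℕ) := by
  refine (degree_sum_le _ _).trans_lt ((Finset.sup_lt_iff (WithBot.bot_lt_coe n)).mpr ?_)
  intro k hk
  obtain ⟨hk1, hkn⟩ := Finset.mem_Icc.mp hk
  exact (degree_C_mul_X_pow_le _ _).trans_lt (WithBot.coe_lt_coe.mpr (Nat.sub_lt_self hk1 hkn))

theorem curvePoly_monic : (curvePoly n a t).Monic :=
  monic_X_pow_add (degree_curvePoly_sub_X_pow_lt n a t)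

theorem natDegree_curvePoly : (curvePoly n a t).natDegree = n := by
  rw [curvePoly, natDegree_add_eq_left_of_degree_lt, natDegree_X_pow]
  simpa only [degree_X_pow] using degree_curvePoly_sub_X_pow_lt n a t

theorem coeff_curvePoly_sub {k : ℕ} (hk1 : 1 ≤ k) (hkn : k ≤ n) :
    (curvePoly n a t).coeff (n - k) = (-1) ^ k * a k t := by
  rw [curvePoly, coeff_add, coeff_X_pow, if_neg (by omega), zero_add, finsetSum_coeff,
    Finset.sum_eq_single k]
  · rw [coeff_C_mul_X_pow, if_pos rfl]
  · intro j hj hjk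
    rw [coeff_C_mul_X_pow, if_neg (by rw [Finset.mem_Icc] at hj; omega)]
  · exact fun hk => absurd (Finset.mem_Icc.mpr ⟨hk1, hkn⟩) hk

theorem esymm_roots_curvePoly (hreal : (curvePoly n a t).roots.card = n) {k : ℕ} (hk1 : 1 ≤ k)
    (hkn : k ≤ n) : (curvePoly n a t).roots.esymm k = a k t := by
  have hdeg := natDegree_curvePoly n a t
  have hvieta := coeff_eq_esymm_roots_of_card (hreal.trans hdeg.symm) (k := n - k) (by omega)
  rw [coeff_curvePoly_sub n a t hk1 hkn, (curvePoly_monic n a t).leadingCoeff, hdeg,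
    Nat.sub_sub_self hkn, one_mul] at hvieta
  exact mul_left_cancel₀ (pow_ne_zero k (neg_ne_zero.mpr one_ne_zero)) hvieta.symm

end curvePoly

theorem abs_le_of_card_roots_curvePoly {n : ℕ} (hn : 2 ≤ n) {a : ℕ → ℝ → ℝ} {t : ℝ}
    (hreal : (curvePoly n a t).roots.card = n) (ha1 : a 1 t = 0) {k : ℕ} (hk1 : 1 ≤ k)
    (hkn : k ≤ n) : |a k t| ≤ n.choose k * √(-2 * a 2 t) ^ k := by
  have hsum : (curvePoly n a t).roots.sum = 0 := by
    rw [← Multiset.esymm_one, esymm_roots_curvePoly n a t hreal le_rfl (by omega), ha1]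
  have hroot (x : ℝ) (hx : x ∈ (curvePoly n a t).roots) : |x| ≤ √(-2 * a 2 t) := by
    rw [← esymm_roots_curvePoly n a t hreal one_le_two hn]
    exact Multiset.abs_le_sqrt_neg_two_mul_esymm_two hsum hx
  have := Multiset.abs_esymm_le hroot k
  rwa [hreal, esymm_roots_curvePoly n a t hreal hk1 hkn] at this

theorem multiplicity_lemma_Cm
    (n m : ℕ) (hn : 2 ≤ n) (hm : n ≤ m) (a : ℕ → ℝ → ℝ)
    (ha1 : ∀ t : ℝ, a 1 t = 0)
    (hsmooth : ∀ k ∈ Finset.Icc 2 n, ContDiff ℝ (m : ℕ) (a k))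
    (hreal : ∀ t : ℝ, ((curvePoly n a t).roots).card = n) :
    (∀ k ∈ Finset.Icc 2 n, ∃ akk : ℝ → ℝ, ContDiff ℝ ((m - k : ℕ)) akk ∧
        ∀ t : ℝ, a k t = t ^ k * akk t) ↔
    (∃ a22 : ℝ → ℝ, ContDiff ℝ ((m - 2 : ℕ)) a22 ∧ ∀ t : ℝ, a 2 t = t ^ 2 * a22 t) := by
  refine ⟨fun h => h 2 (Finset.mem_Icc.mpr ⟨le_rfl, hn⟩), ?_⟩
  rintro ⟨a22, ha22, ha2⟩ k hk
  obtain ⟨hk2, hkn⟩ := Finset.mem_Icc.mp hk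
  have hbound (t : ℝ) : |a k t| ≤ n.choose k * √(-2 * a22 t) ^ k * |t| ^ k :=
    calc |a k t| ≤ n.choose k * √(-2 * a 2 t) ^ k :=
          abs_le_of_card_roots_curvePoly hn (hreal t) (ha1 t) (by omega) hkn
      _ = n.choose k * √(-2 * a22 t) ^ k * |t| ^ k := by
          rw [ha2, show -2 * (t ^ 2 * a22 t) = t ^ 2 * (-2 * a22 t) by ring,
            Real.sqrt_mul (sq_nonneg t), Real.sqrt_sq_eq_abs]
          ring
  have ha22c := ha22.continuous
  obtain ⟨akk, hakk, hakk_eq, -⟩ :=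
    exists_contDiff_eq_pow_mul_of_abs_le (by omega) (hsmooth k hk) (by fun_prop) hbound
  exact ⟨akk, hakk, hakk_eq⟩
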